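/- Let A be an associative H-pseudoalgebra and M an A-bimodule. Every inner derivation f_u (u ∈ M), defined by f_u(a) = [(id⊗ε) ⊗_H id_M](a*u) − [(ε⊗id) ⊗_H id_M](u*a), is a derivation: f_u(a*b) = a * f_u(b) + f_u(a) * b in H⊗² ⊗_H M, where f_u is extended trivially to a map H⊗² ⊗_H A → H⊗² ⊗_H M (i.e. f_u(g ⊗_H c) = g ⊗_H f_u(c)). -/
import Mathlib


open TensorProduct

/- For a Hopf algebra `H` over `ℂ`, the space `(H ⊗ H) ⊗_H M` (with `H` acting on `H ⊗ H` on
the right via `Δ`) is a free right `H`-module with basis `H ⊗ 1`; we use its standard model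
`H ⊗[ℂ] M`, with `(h ⊗ g) ⊗_H m` corresponding to `Σ h·S(g₍₁₎) ⊗ g₍₂₎m`, so that
`(h ⊗ 1) ⊗_H m ↔ h ⊗ m`. -/

variable (H : Type*) [Ring H] [HopfAlgebra ℂ H]
variable (N : Type*) [AddCommGroup N] [Module ℂ N] [Module H N]
  [IsScalarTower ℂ H N] [SMulCommClass ℂ H N]

/-- The `H`-action `H ⊗[ℂ] N → N` as a `ℂ`-linear map. -/
noncomputable def actHom : H ⊗[ℂ] N →ₗ[ℂ] N :=
  TensorProduct.lift
    (LinearMap.mk₂ ℂ (fun h n => h • n)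
      (fun h h' n => add_smul h h' n)
      (fun c h n => smul_assoc c h n)
      (fun h n n' => smul_add h n n')
      (fun c h n => smul_comm h c n))

/-- `(x ⊗ y) ⊗ (f ⊗ n) ↦ (f · S(x)) ⊗ (y • n)`. -/
noncomputable def bigMap : (H ⊗[ℂ] H) ⊗[ℂ] (H ⊗[ℂ] N) →ₗ[ℂ] H ⊗[ℂ] N :=
  (TensorProduct.map ((LinearMap.mul' ℂ H) ∘ₗ (TensorProduct.comm ℂ H H).toLinearMap)
      (actHom H N)) ∘ₗ
    (TensorProduct.tensorTensorTensorComm ℂ H H H N).toLinearMap ∘ₗ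
    (LinearMap.rTensor (H ⊗[ℂ] N) (LinearMap.rTensor H (HopfAlgebra.antipode (R := ℂ))))

/-- The action of `(1 ⊗ h) ⊗_H 1` on `(H ⊗ H) ⊗_H N ≅ H ⊗[ℂ] N`:
`f ⊗ n ↦ Σ (f · S(h₍₁₎)) ⊗ (h₍₂₎ • n)`. -/
noncomputable def secondAct (h : H) : H ⊗[ℂ] N →ₗ[ℂ] H ⊗[ℂ] N :=
  (bigMap H N) ∘ₗ (TensorProduct.mk ℂ (H ⊗[ℂ] H) (H ⊗[ℂ] N) (Coalgebra.comul (R := ℂ) h))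

/-- The action of `(h ⊗ 1) ⊗_H 1` on `(H ⊗ H) ⊗_H N ≅ H ⊗[ℂ] N`. -/
noncomputable def firstAct (h : H) : H ⊗[ℂ] N →ₗ[ℂ] H ⊗[ℂ] N :=
  LinearMap.rTensor N (LinearMap.mulLeft ℂ h)

/-- `[(ε ⊗ id) ⊗_H id_N] : (H ⊗ H) ⊗_H N → N`, in the model: `h ⊗ n ↦ ε(h) n`. -/
noncomputable def epsFirst : H ⊗[ℂ] N →ₗ[ℂ] N :=
  (TensorProduct.lid ℂ N).toLinearMap ∘ₗ LinearMap.rTensor N (Coalgebra.counit (R := ℂ))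

/-- `[(id ⊗ ε) ⊗_H id_N] : (H ⊗ H) ⊗_H N → N`, in the model: `h ⊗ n ↦ h • n`. -/
noncomputable def epsSecond : H ⊗[ℂ] N →ₗ[ℂ] N := actHom H N

/-- `x ⊗ (y ⊗ n) ↦ y ⊗ (x ⊗ n)` on the model `H ⊗ (H ⊗ N)` of `H^{⊗3} ⊗_H N`. -/
noncomputable def swap12 : H ⊗[ℂ] (H ⊗[ℂ] N) →ₗ[ℂ] H ⊗[ℂ] (H ⊗[ℂ] N) :=
  (TensorProduct.leftComm ℂ H H N).toLinearMap

/-- `f ⊗ ((k₁ ⊗ k₂) ⊗ n) ↦ (f·k₁) ⊗ (k₂ ⊗ n)`. -/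
noncomputable def shuffleMul : H ⊗[ℂ] ((H ⊗[ℂ] H) ⊗[ℂ] N) →ₗ[ℂ] H ⊗[ℂ] (H ⊗[ℂ] N) :=
  (LinearMap.rTensor (H ⊗[ℂ] N) (LinearMap.mul' ℂ H)) ∘ₗ
    (TensorProduct.assoc ℂ H H (H ⊗[ℂ] N)).symm.toLinearMap ∘ₗ
    (LinearMap.lTensor H (TensorProduct.assoc ℂ H H N).toLinearMap)

variable {H}

/-- The extension of a pseudoproduct/pseudoaction `f : A ⊗ B → (H⊗H) ⊗_H C` to
`((H⊗H) ⊗_H A) ⊗ B → H^{⊗3} ⊗_H C`, `(x ⊗_H a) * b`, in the models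
`H ⊗[ℂ] A` and `H ⊗[ℂ] (H ⊗[ℂ] C)`. -/
noncomputable def pstarL {A B C : Type*}
    [AddCommGroup A] [Module ℂ A] [AddCommGroup B] [Module ℂ B] [AddCommGroup C] [Module ℂ C]
    (f : A →ₗ[ℂ] B →ₗ[ℂ] H ⊗[ℂ] C) (b : B) : H ⊗[ℂ] A →ₗ[ℂ] H ⊗[ℂ] (H ⊗[ℂ] C) :=
  shuffleMul H C ∘ₗ
    LinearMap.lTensor H ((LinearMap.rTensor C (Coalgebra.comul (R := ℂ))) ∘ₗ (f.flip b))

/-- The extension of `f : A ⊗ B → (H⊗H) ⊗_H C` to `A ⊗ ((H⊗H) ⊗_H B) → H^{⊗3} ⊗_H C`,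
`a * (x ⊗_H b)`, in the models. -/
noncomputable def pstarR {A B C : Type*}
    [AddCommGroup A] [Module ℂ A] [AddCommGroup B] [Module ℂ B] [AddCommGroup C] [Module ℂ C]
    (f : A →ₗ[ℂ] B →ₗ[ℂ] H ⊗[ℂ] C) (a : A) : H ⊗[ℂ] B →ₗ[ℂ] H ⊗[ℂ] (H ⊗[ℂ] C) :=
  swap12 H C ∘ₗ LinearMap.lTensor H (f a)

variable (H)

/-- `[(id ⊗ id ⊗ ε) ⊗_H id_N] : H^{⊗3} ⊗_H N → H^{⊗2} ⊗_H N` in the models: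
`h ⊗ (g ⊗ n) ↦ Σ (h·S(g₍₁₎)) ⊗ (g₍₂₎ • n)`. -/
noncomputable def epsThird : H ⊗[ℂ] (H ⊗[ℂ] N) →ₗ[ℂ] H ⊗[ℂ] N :=
  LinearMap.lTensor H (actHom H N) ∘ₗ shuffleMul H N ∘ₗ
    LinearMap.lTensor H
      ((LinearMap.rTensor N (LinearMap.rTensor H (HopfAlgebra.antipode (R := ℂ)))) ∘ₗ
        (LinearMap.rTensor N (Coalgebra.comul (R := ℂ))))

section Aux

open LinearMap Coalgebra HopfAlgebra

variable {H : Type*} [Ring H] [HopfAlgebra ℂ H]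
variable {N : Type*} [AddCommGroup N] [Module ℂ N] [Module H N]
  [IsScalarTower ℂ H N] [SMulCommClass ℂ H N]

/-- `h ↦ h • n` as a `ℂ`-linear map. -/
noncomputable def smulBy (n : N) : H →ₗ[ℂ] N where
  toFun h := h • n
  map_add' a b := add_smul a b n
  map_smul' c h := smul_assoc c h n

@[simp] lemma smulBy_apply (n : N) (h : H) : smulBy n h = h • n := rfl

@[simp] lemma actHom_tmul (h : H) (n : N) : actHom H N (h ⊗ₜ[ℂ] n) = h • n := rfl

@[simp] lemma epsFirst_tmul (h : H) (n : N) :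
    epsFirst H N (h ⊗ₜ[ℂ] n) = counit (R := ℂ) h • n := by
  simp [epsFirst]

@[simp] lemma firstAct_tmul (h k : H) (n : N) :
    firstAct H N h (k ⊗ₜ[ℂ] n) = (h * k) ⊗ₜ[ℂ] n := by
  simp [firstAct]

@[simp] lemma swap12_tmul (x y : H) (n : N) :
    swap12 H N (x ⊗ₜ[ℂ] (y ⊗ₜ[ℂ] n)) = y ⊗ₜ[ℂ] (x ⊗ₜ[ℂ] n) := by
  simp [swap12]

@[simp] lemma shuffleMul_tmul (f x y : H) (n : N) :
    shuffleMul H N (f ⊗ₜ[ℂ] ((x ⊗ₜ[ℂ] y) ⊗ₜ[ℂ] n)) = (f * x) ⊗ₜ[ℂ] (y ⊗ₜ[ℂ] n) := by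
  simp [shuffleMul]

@[simp] lemma bigMap_tmul (x y f : H) (n : N) :
    bigMap H N ((x ⊗ₜ[ℂ] y) ⊗ₜ[ℂ] (f ⊗ₜ[ℂ] n))
      = (f * antipode (R := ℂ) x) ⊗ₜ[ℂ] (y • n) := by
  simp [bigMap]

lemma bigMap_w (w : H ⊗[ℂ] H) (k : H) (n : N) :
    bigMap H N (w ⊗ₜ[ℂ] (k ⊗ₜ[ℂ] n))
      = TensorProduct.map (mulLeft ℂ k ∘ₗ antipode (R := ℂ)) (smulBy n) w := by
  induction w using TensorProduct.induction_on with
  | zero => simp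
  | tmul x y => simp
  | add p q hp hq => simp [TensorProduct.add_tmul, hp, hq]

lemma secondAct_tmul (h k : H) (n : N) :
    secondAct H N h (k ⊗ₜ[ℂ] n)
      = TensorProduct.map (mulLeft ℂ k ∘ₗ antipode (R := ℂ)) (smulBy n) (comul (R := ℂ) h) := by
  rw [secondAct, LinearMap.comp_apply, TensorProduct.mk_apply]
  exact bigMap_w _ _ _

lemma epsThird_tmul (a y : H) (n : N) :
    epsThird H N (a ⊗ₜ[ℂ] (y ⊗ₜ[ℂ] n))
      = TensorProduct.map (mulLeft ℂ a ∘ₗ antipode (R := ℂ)) (smulBy n) (comul (R := ℂ) y) := by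
  have key : ∀ w : H ⊗[ℂ] H,
      lTensor H (actHom H N)
          (shuffleMul H N (a ⊗ₜ[ℂ] ((rTensor H (antipode (R := ℂ)) w) ⊗ₜ[ℂ] n)))
        = TensorProduct.map (mulLeft ℂ a ∘ₗ antipode (R := ℂ)) (smulBy n) w := by
    intro w
    induction w using TensorProduct.induction_on with
    | zero => simp
    | tmul x y => simp
    | add p q hp hq => simp [map_add, TensorProduct.add_tmul, TensorProduct.tmul_add, hp, hq]
  rw [epsThird]
  simp only [LinearMap.comp_apply, lTensor_tmul, rTensor_tmul]
  exact key _

end Aux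

/-- `x ⊗ y ↦ Σ x·S(y₍₁₎) ⊗ y₍₂₎`, the key map for the Hopf computation. -/
noncomputable def theta {H : Type*} [Ring H] [HopfAlgebra ℂ H] : H ⊗[ℂ] H →ₗ[ℂ] H ⊗[ℂ] H :=
  LinearMap.rTensor H (LinearMap.mul' ℂ H) ∘ₗ (TensorProduct.assoc ℂ H H H).symm.toLinearMap ∘ₗ
    LinearMap.lTensor H ((LinearMap.rTensor H (HopfAlgebra.antipode (R := ℂ))) ∘ₗ
      Coalgebra.comul (R := ℂ))

section Aux2

open LinearMap Coalgebra HopfAlgebra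

set_option linter.unusedSectionVars false
set_option synthInstance.maxHeartbeats 1000000
set_option maxHeartbeats 1000000

variable {H : Type*} [Ring H] [HopfAlgebra ℂ H]

lemma theta_tmul (x y : H) :
    theta (x ⊗ₜ[ℂ] y)
      = TensorProduct.map (mulLeft ℂ x ∘ₗ antipode (R := ℂ)) LinearMap.id (comul (R := ℂ) y) := by
  have key : ∀ v : H ⊗[ℂ] H,
      rTensor H (mul' ℂ H) ((TensorProduct.assoc ℂ H H H).symm
          (x ⊗ₜ[ℂ] (rTensor H (antipode (R := ℂ)) v)))
        = TensorProduct.map (mulLeft ℂ x ∘ₗ antipode (R := ℂ)) LinearMap.id v := by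
    intro v
    induction v using TensorProduct.induction_on with
    | zero => simp
    | tmul p q => simp
    | add p q hp hq => simp [map_add, TensorProduct.tmul_add, hp, hq]
  rw [theta]
  simp only [LinearMap.comp_apply, lTensor_tmul, LinearEquiv.coe_coe]
  exact key _

set_option maxHeartbeats 1000000 in
lemma keymap : (LinearMap.rTensor H (mul' ℂ H)) ∘ₗ (TensorProduct.assoc ℂ H H H).symm.toLinearMap ∘ₗ
      (lTensor H (rTensor H (antipode (R := ℂ)))) ∘ₗ (TensorProduct.assoc ℂ H H H).toLinearMap
    = rTensor H (mul' ℂ H ∘ₗ lTensor H (antipode (R := ℂ))) := by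
  ext p q c
  simp


lemma theta_comul (k : H) : theta (comul (R := ℂ) k) = (1 : H) ⊗ₜ[ℂ] k := by
  rw [theta]
  simp only [LinearMap.comp_apply, LinearEquiv.coe_coe]
  rw [lTensor_comp, LinearMap.comp_apply, ← Coalgebra.coassoc_apply]
  have hk := LinearMap.congr_fun keymap (rTensor H (comul (R := ℂ)) (comul (R := ℂ) k))
  simp only [LinearMap.comp_apply, LinearEquiv.coe_coe] at hk
  rw [hk]
  have h2 : ((mul' ℂ H ∘ₗ lTensor H (antipode (R := ℂ))) ∘ₗ comul (R := ℂ) : H →ₗ[ℂ] H)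
      = (Algebra.linearMap ℂ H) ∘ₗ counit := by
    rw [LinearMap.comp_assoc]
    exact HopfAlgebra.mul_antipode_lTensor_comul
  rw [← LinearMap.comp_apply, ← rTensor_comp, h2, rTensor_comp, LinearMap.comp_apply,
    Coalgebra.rTensor_counit_comul]
  simp

end Aux2

section Aux3

open LinearMap Coalgebra HopfAlgebra

set_option linter.unusedSectionVars false
set_option synthInstance.maxHeartbeats 1000000
set_option maxHeartbeats 1000000

variable {H : Type*} [Ring H] [HopfAlgebra ℂ H]
variable {N : Type*} [AddCommGroup N] [Module ℂ N] [Module H N]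
  [IsScalarTower ℂ H N] [SMulCommClass ℂ H N]

/-- `h ⊗ p ↦ ε(h) • p`; agrees with `epsFirst` but only needs a `ℂ`-module. -/
noncomputable def epsHead (P : Type*) [AddCommGroup P] [Module ℂ P] :
    H ⊗[ℂ] P →ₗ[ℂ] P :=
  (TensorProduct.lid ℂ P).toLinearMap ∘ₗ LinearMap.rTensor P (Coalgebra.counit (R := ℂ))

@[simp] lemma epsHead_tmul {P : Type*} [AddCommGroup P] [Module ℂ P] (h : H) (p : P) :
    epsHead P (h ⊗ₜ[ℂ] p) = counit (R := ℂ) h • p := by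
  simp [epsHead]

lemma epsFirst_eq_epsHead : epsFirst H N = epsHead N := rfl

lemma epsHead_comul (k : H) : epsHead H (comul (R := ℂ) k) = k := by
  rw [epsHead, LinearMap.comp_apply, Coalgebra.rTensor_counit_comul]
  simp

lemma epsThird_shuffle (h : H) (x : H ⊗[ℂ] N) :
    epsThird H N (shuffleMul H N (h ⊗ₜ[ℂ] (rTensor N (comul (R := ℂ)) x)))
      = h ⊗ₜ[ℂ] actHom H N x := by
  induction x using TensorProduct.induction_on with
  | zero => simp
  | tmul k n =>
    have key : ∀ w : H ⊗[ℂ] H,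
        epsThird H N (shuffleMul H N (h ⊗ₜ[ℂ] (w ⊗ₜ[ℂ] n)))
          = TensorProduct.map (mulLeft ℂ h) (smulBy n) (theta w) := by
      intro w
      induction w using TensorProduct.induction_on with
      | zero => simp
      | tmul x y =>
        rw [shuffleMul_tmul, epsThird_tmul, theta_tmul,
          ← LinearMap.comp_apply (TensorProduct.map (mulLeft ℂ h) (smulBy n)),
          ← TensorProduct.map_comp]
        congr 2
        rw [mulLeft_mul, LinearMap.comp_assoc]
      | add p q hp hq =>
        simp only [map_add, TensorProduct.add_tmul, TensorProduct.tmul_add, hp, hq]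
    rw [rTensor_tmul, key, theta_comul]
    simp
  | add p q hp hq => simp [map_add, TensorProduct.tmul_add, hp, hq]

lemma epsThird_swap (h : H) (y : H ⊗[ℂ] N) :
    epsThird H N (swap12 H N (h ⊗ₜ[ℂ] y)) = secondAct H N h y := by
  induction y using TensorProduct.induction_on with
  | zero => simp
  | tmul k n => rw [swap12_tmul, epsThird_tmul, secondAct_tmul]
  | add p q hp hq => simp [map_add, TensorProduct.tmul_add, hp, hq]

lemma epsHead_swap (h : H) (y : H ⊗[ℂ] N) :
    epsHead (H ⊗[ℂ] N) (swap12 H N (h ⊗ₜ[ℂ] y)) = h ⊗ₜ[ℂ] epsHead N y := by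
  induction y using TensorProduct.induction_on with
  | zero => simp
  | tmul k n => simp [TensorProduct.tmul_smul]
  | add p q hp hq => simp [map_add, TensorProduct.tmul_add, hp, hq]

lemma lTensor_epsHead_swap (h : H) (y : H ⊗[ℂ] N) :
    lTensor H (epsHead N) (swap12 H N (h ⊗ₜ[ℂ] y)) = counit (R := ℂ) h • y := by
  induction y using TensorProduct.induction_on with
  | zero => simp
  | tmul k n => simp [TensorProduct.tmul_smul]
  | add p q hp hq => simp [map_add, TensorProduct.tmul_add, hp, hq, smul_add]

lemma epsHead_shuffle (h : H) (y : H ⊗[ℂ] N) :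
    epsHead (H ⊗[ℂ] N) (shuffleMul H N (h ⊗ₜ[ℂ] rTensor N (comul (R := ℂ)) y))
      = counit (R := ℂ) h • y := by
  induction y using TensorProduct.induction_on with
  | zero => simp
  | tmul k n =>
    have key : ∀ w : H ⊗[ℂ] H,
        epsHead (H ⊗[ℂ] N) (shuffleMul H N (h ⊗ₜ[ℂ] (w ⊗ₜ[ℂ] n)))
          = counit (R := ℂ) h • ((epsHead H w) ⊗ₜ[ℂ] n) := by
      intro w
      induction w using TensorProduct.induction_on with
      | zero => simp
      | tmul x y => simp [TensorProduct.smul_tmul', mul_smul]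
      | add p q hp hq =>
        simp [map_add, TensorProduct.add_tmul, TensorProduct.tmul_add, hp, hq, smul_add]
    rw [rTensor_tmul, key, epsHead_comul]
  | add p q hp hq => simp [map_add, TensorProduct.tmul_add, hp, hq, smul_add]

lemma lTensor_epsHead_shuffle (h : H) (y : H ⊗[ℂ] N) :
    lTensor H (epsHead N) (shuffleMul H N (h ⊗ₜ[ℂ] rTensor N (comul (R := ℂ)) y))
      = firstAct H N h y := by
  induction y using TensorProduct.induction_on with
  | zero => simp
  | tmul k n =>
    have key : ∀ w : H ⊗[ℂ] H,
        lTensor H (epsHead N) (shuffleMul H N (h ⊗ₜ[ℂ] (w ⊗ₜ[ℂ] n)))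
          = TensorProduct.map (mulLeft ℂ h) (toSpanSingleton ℂ N n ∘ₗ counit (R := ℂ)) w := by
      intro w
      induction w using TensorProduct.induction_on with
      | zero => simp
      | tmul x y => simp [toSpanSingleton_apply]
      | add p q hp hq =>
        simp [map_add, TensorProduct.add_tmul, TensorProduct.tmul_add, hp, hq]
    rw [rTensor_tmul, key, ← LinearMap.rTensor_comp_lTensor, LinearMap.comp_apply,
      lTensor_comp, LinearMap.comp_apply, Coalgebra.lTensor_counit_comul]
    simp [firstAct]
  | add p q hp hq => simp [map_add, TensorProduct.tmul_add, hp, hq]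

variable {A' B' : Type*} [AddCommGroup A'] [Module ℂ A'] [AddCommGroup B'] [Module ℂ B']

lemma pstarL_tmul (f : A' →ₗ[ℂ] B' →ₗ[ℂ] H ⊗[ℂ] N) (b : B') (h : H) (a : A') :
    pstarL f b (h ⊗ₜ[ℂ] a)
      = shuffleMul H N (h ⊗ₜ[ℂ] rTensor N (comul (R := ℂ)) (f a b)) := by
  simp [pstarL]

lemma E1L (f : A' →ₗ[ℂ] B' →ₗ[ℂ] H ⊗[ℂ] N) (u : B') (x : H ⊗[ℂ] A') :
    epsThird H N (pstarL f u x) = lTensor H (actHom H N ∘ₗ f.flip u) x := by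
  induction x using TensorProduct.induction_on with
  | zero => simp
  | tmul h a => rw [pstarL_tmul, epsThird_shuffle, lTensor_tmul]; simp
  | add p q hp hq => simp [map_add, hp, hq]

lemma E1R (f : A' →ₗ[ℂ] N →ₗ[ℂ] H ⊗[ℂ] N) (a : A')
    (hf : ∀ (h : H) (m : N), f a (h • m) = secondAct H N h (f a m)) (x : H ⊗[ℂ] N) :
    epsThird H N (pstarR f a x) = f a (actHom H N x) := by
  induction x using TensorProduct.induction_on with
  | zero => simp
  | tmul h m =>
    rw [pstarR, LinearMap.comp_apply, lTensor_tmul, epsThird_swap, ← hf, actHom_tmul]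
  | add p q hp hq => simp [map_add, hp, hq]

lemma E2L (f : N →ₗ[ℂ] B' →ₗ[ℂ] H ⊗[ℂ] N) (b : B') (x : H ⊗[ℂ] N) :
    epsHead (H ⊗[ℂ] N) (pstarL f b x) = f (epsHead N x) b := by
  induction x using TensorProduct.induction_on with
  | zero => simp
  | tmul h m =>
    rw [pstarL_tmul, epsHead_shuffle, epsHead_tmul, map_smul, LinearMap.smul_apply]
  | add p q hp hq => simp [map_add, hp, hq]

lemma E2R (f : B' →ₗ[ℂ] A' →ₗ[ℂ] H ⊗[ℂ] N) (u : B') (x : H ⊗[ℂ] A') :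
    epsHead (H ⊗[ℂ] N) (pstarR f u x) = lTensor H (epsHead N ∘ₗ f u) x := by
  induction x using TensorProduct.induction_on with
  | zero => simp
  | tmul h c =>
    rw [pstarR, LinearMap.comp_apply, lTensor_tmul, epsHead_swap, lTensor_tmul]; rfl
  | add p q hp hq => simp [map_add, hp, hq]

lemma E3L (f : N →ₗ[ℂ] B' →ₗ[ℂ] H ⊗[ℂ] N) (b : B')
    (hf : ∀ (h : H) (m : N), f (h • m) b = firstAct H N h (f m b)) (x : H ⊗[ℂ] N) :
    lTensor H (epsHead N) (pstarL f b x) = f (actHom H N x) b := by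
  induction x using TensorProduct.induction_on with
  | zero => simp
  | tmul h m => rw [pstarL_tmul, lTensor_epsHead_shuffle, ← hf, actHom_tmul]
  | add p q hp hq => simp [map_add, hp, hq]

lemma E3R (f : A' →ₗ[ℂ] N →ₗ[ℂ] H ⊗[ℂ] N) (a : A') (x : H ⊗[ℂ] N) :
    lTensor H (epsHead N) (pstarR f a x) = f a (epsHead N x) := by
  induction x using TensorProduct.induction_on with
  | zero => simp
  | tmul h m =>
    rw [pstarR, LinearMap.comp_apply, lTensor_tmul, lTensor_epsHead_swap, epsHead_tmul,
      map_smul]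
  | add p q hp hq => simp [map_add, hp, hq]

end Aux3

variable {H}

/-- `f_u` as a `ℂ`-linear map:
`f_u(a) = [(id⊗ε) ⊗_H id_M](a*u) − [(ε⊗id) ⊗_H id_M](u*a)`. -/
noncomputable def fU {A M : Type*}
    [AddCommGroup A] [Module ℂ A] [Module H A] [IsScalarTower ℂ H A] [SMulCommClass ℂ H A]
    [AddCommGroup M] [Module ℂ M] [Module H M] [IsScalarTower ℂ H M] [SMulCommClass ℂ H M]
    (mulAM : A →ₗ[ℂ] M →ₗ[ℂ] H ⊗[ℂ] M) (mulMA : M →ₗ[ℂ] A →ₗ[ℂ] H ⊗[ℂ] M)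
    (u : M) : A →ₗ[ℂ] M :=
  epsSecond H M ∘ₗ mulAM.flip u - epsFirst H M ∘ₗ mulMA u

/-- for an associative `H`-pseudoalgebra `A` and an `A`-bimodule `M`, every
inner derivation `f_u` is a derivation: `f_u(a*b) = a*f_u(b) + f_u(a)*b` in `H⊗² ⊗_H M`
(the extension of `f_u` to `H⊗² ⊗_H A` being the trivial one, `g ⊗_H c ↦ g ⊗_H f_u(c)`). -/
theorem fU_is_derivation {A M : Type*}
    [AddCommGroup A] [Module ℂ A] [Module H A] [IsScalarTower ℂ H A] [SMulCommClass ℂ H A]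
    [AddCommGroup M] [Module ℂ M] [Module H M] [IsScalarTower ℂ H M] [SMulCommClass ℂ H M]
    -- the pseudoproduct of `A` and the two pseudoactions on `M`
    (mulA : A →ₗ[ℂ] A →ₗ[ℂ] H ⊗[ℂ] A)
    (mulAM : A →ₗ[ℂ] M →ₗ[ℂ] H ⊗[ℂ] M) (mulMA : M →ₗ[ℂ] A →ₗ[ℂ] H ⊗[ℂ] M)
    -- `H⊗²`-linearity
    (hA1 : ∀ (h : H) a b, mulA (h • a) b = firstAct H A h (mulA a b))
    (hA2 : ∀ (h : H) a b, mulA a (h • b) = secondAct H A h (mulA a b))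
    (hAM1 : ∀ (h : H) a m, mulAM (h • a) m = firstAct H M h (mulAM a m))
    (hAM2 : ∀ (h : H) a m, mulAM a (h • m) = secondAct H M h (mulAM a m))
    (hMA1 : ∀ (h : H) m a, mulMA (h • m) a = firstAct H M h (mulMA m a))
    (hMA2 : ∀ (h : H) m a, mulMA m (h • a) = secondAct H M h (mulMA m a))
    -- associativity of `A` and the bimodule axioms for `M`
    (hassoc : ∀ a b c, pstarL mulA c (mulA a b) = pstarR mulA a (mulA b c))
    (hLmod : ∀ a b m, pstarL mulAM m (mulA a b) = pstarR mulAM a (mulAM b m))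
    (hRmod : ∀ m a b, pstarL mulMA b (mulMA m a) = pstarR mulMA m (mulA a b))
    (hBi : ∀ a m b, pstarL mulMA b (mulAM a m) = pstarR mulAM a (mulMA m b))
    (u : M) :
    ∀ a b : A,
      LinearMap.lTensor H (fU mulAM mulMA u) (mulA a b)
        = mulAM a (fU mulAM mulMA u b) + mulMA (fU mulAM mulMA u a) b := by
  intro a b
  have e1 := congrArg (epsThird H M) (hLmod a b u)
  rw [E1L, E1R mulAM a (fun h m => hAM2 h a m)] at e1
  have e2 := congrArg (epsHead (H ⊗[ℂ] M)) (hRmod u a b)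
  rw [E2L, E2R] at e2
  have e3 := congrArg (LinearMap.lTensor H (epsHead M)) (hBi a u b)
  rw [E3L mulMA b (fun h m => hMA1 h m b), E3R] at e3
  have hfU : fU mulAM mulMA u
      = actHom H M ∘ₗ mulAM.flip u - epsHead M ∘ₗ mulMA u := rfl
  have hfUa : ∀ c : A, fU mulAM mulMA u c
      = actHom H M (mulAM c u) - epsHead M (mulMA u c) := fun c => rfl
  rw [hfUa a, hfUa b, hfU, LinearMap.lTensor_sub, LinearMap.sub_apply, e1, ← e2,
    map_sub (mulAM a), map_sub mulMA, LinearMap.sub_apply, e3]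
  abel
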